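/- arXiv:1602.01176 — 5 statements merged into one kernel-verified Lean document; each statement's English description precedes it below -/
import Mathlib

section
/- Let 𝓘 and 𝓘' be interpreted systems over the same state set S with 𝓘 ⊆ 𝓘', let r be a run of 𝓘 and m ∈ ℕ, and let φ be a CTL*K formula in which every occurrence of a knowledge operator K_i and of the branching operator A is in positive position. Then 𝓘',(r,m) ⊨ φ implies 𝓘,(r,m) ⊨ φ. -/
namespace EpiSyn

/-- Syntax of CTL*K over atomic propositions `P` and agents `A`. -/
inductive Formula (P A : Type) : Type
  | atom  : P → Formula P A
  | neg   : Formula P A → Formula P A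
  | or    : Formula P A → Formula P A → Formula P A
  | next  : Formula P A → Formula P A
  | untl  : Formula P A → Formula P A → Formula P A
  | all   : Formula P A → Formula P A
  | know  : A → Formula P A → Formula P A

/-- An interpreted system over global states `S`: a set of runs, an
indistinguishability relation on points for each agent (an equivalence
relation on points of the system), and an interpretation of propositions. -/
structure IS (S P A : Type) where
  runs : Set (ℕ → S)
  sim  : A → ((ℕ → S) × ℕ) → ((ℕ → S) × ℕ) → Prop
  intp : S → Set P
  sim_refl : ∀ i r m, r ∈ runs → sim i (r, m) (r, m)
  sim_symm : ∀ i p q, p.1 ∈ runs → q.1 ∈ runs → sim i p q → sim i q p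
  sim_trans : ∀ i p q u, p.1 ∈ runs → q.1 ∈ runs → u.1 ∈ runs →
      sim i p q → sim i q u → sim i p u

variable {S P A : Type}

/-- Bundle semantics of CTL*K at a point `(r, m)` of an interpreted system. -/
def sat (I : IS S P A) : Formula P A → (ℕ → S) → ℕ → Prop
  | .atom p, r, m => p ∈ I.intp (r m)
  | .neg φ, r, m => ¬ sat I φ r m
  | .or φ ψ, r, m => sat I φ r m ∨ sat I ψ r m
  | .next φ, r, m => sat I φ r (m + 1)
  | .untl φ ψ, r, m =>
      ∃ m', m ≤ m' ∧ sat I ψ r m' ∧ ∀ k, m ≤ k → k < m' → sat I φ r k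
  | .all φ, r, m => ∀ r' ∈ I.runs, (∀ k, k ≤ m → r' k = r k) → sat I φ r' m
  | .know i φ, r, m => ∀ r' ∈ I.runs, ∀ m', I.sim i (r', m') (r, m) → sat I φ r' m'

/-- `I ⊨ φ` : satisfaction at time `0` of every run. -/
def valid (I : IS S P A) (φ : Formula P A) : Prop := ∀ r ∈ I.runs, sat I φ r 0

/-- `I ⊆ I'` : same states and interpretation, fewer runs, and the
indistinguishability relations of `I` are the restrictions of those of `I'`. -/
def Subsystem (I I' : IS S P A) : Prop :=
  I.runs ⊆ I'.runs ∧ I.intp = I'.intp ∧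
  ∀ (i : A) (r : ℕ → S) (m : ℕ) (r' : ℕ → S) (m' : ℕ), r ∈ I.runs → r' ∈ I.runs →
    (I.sim i (r, m) (r', m') ↔ I'.sim i (r, m) (r', m'))

/-- `okPol φ b` : when `φ` occurs in a context of polarity `b`
(`true` = under an even number of negations), every occurrence of a
knowledge operator or of the branching operator `all` in `φ` is in
positive position (under an even number of negations overall). -/
def okPol : Formula P A → Bool → Prop
  | .atom _, _ => True
  | .neg φ, b => okPol φ (!b)
  | .or φ ψ, b => okPol φ b ∧ okPol ψ b
  | .next φ, b => okPol φ b
  | .untl φ ψ, b => okPol φ b ∧ okPol ψ b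
  | .all φ, b => b = true ∧ okPol φ b
  | .know _ φ, b => b = true ∧ okPol φ b

/-- Every occurrence of a knowledge operator `K_i` and of the branching
operator `A` in `φ` is in positive position. -/
def Positive (φ : Formula P A) : Prop := okPol φ true

/-- Derived operators. -/
def Formula.and (φ ψ : Formula P A) : Formula P A := .neg (.or (.neg φ) (.neg ψ))

def Formula.imp (φ ψ : Formula P A) : Formula P A := .or (.neg φ) ψ

def Formula.iff (φ ψ : Formula P A) : Formula P A := Formula.and (φ.imp ψ) (ψ.imp φ)

/-- The truth constant, expressed in the base syntax. -/
def ttF [Inhabited P] : Formula P A := .or (.atom default) (.neg (.atom default))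

/-- `F φ = true U φ`. -/
def Ff [Inhabited P] (φ : Formula P A) : Formula P A := .untl ttF φ

/-- `G φ = ¬ F ¬ φ`. -/
def Gf [Inhabited P] (φ : Formula P A) : Formula P A := .neg (Ff (.neg φ))

/-- `AG φ = A (G φ)`. -/
def AGf [Inhabited P] (φ : Formula P A) : Formula P A := .all (Gf φ)

/-- `AX φ = A (X φ)`. -/
def AXf (φ : Formula P A) : Formula P A := .all (.next φ)

/-- The fragment CTLK⁺. -/
inductive CTLKp (P A : Type) : Type
  | atom : P → CTLKp P A
  | natom : P → CTLKp P A
  | or : CTLKp P A → CTLKp P A → CTLKp P A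
  | and : CTLKp P A → CTLKp P A → CTLKp P A
  | ax : CTLKp P A → CTLKp P A
  | af : CTLKp P A → CTLKp P A
  | ag : CTLKp P A → CTLKp P A
  | au : CTLKp P A → CTLKp P A → CTLKp P A
  | ar : CTLKp P A → CTLKp P A → CTLKp P A
  | know : A → CTLKp P A → CTLKp P A

/-- Expansion of a CTLK⁺ formula into the base CTL*K syntax
(`AX φ = A X φ`, `AF φ = A (true U φ)`, `AG φ = A ¬(true U ¬φ)`,
`A(φ R ψ) = A ¬((¬φ) U (¬ψ))`, `φ ∧ ψ = ¬(¬φ ∨ ¬ψ)`). -/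
def CTLKp.toFormula [Inhabited P] : CTLKp P A → Formula P A
  | .atom p => .atom p
  | .natom p => .neg (.atom p)
  | .or φ ψ => .or φ.toFormula ψ.toFormula
  | .and φ ψ => Formula.and φ.toFormula ψ.toFormula
  | .ax φ => .all (.next φ.toFormula)
  | .af φ => .all (Ff φ.toFormula)
  | .ag φ => .all (Gf φ.toFormula)
  | .au φ ψ => .all (.untl φ.toFormula ψ.toFormula)
  | .ar φ ψ => .all (.neg (.untl (.neg φ.toFormula) (.neg ψ.toFormula)))
  | .know i φ => .know i φ.toFormula

/-- `φ` is (the expansion of) a formula of the fragment CTLK⁺. -/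
def InCTLKplus [Inhabited P] (φ : Formula P A) : Prop :=
  ∃ c : CTLKp P A, c.toFormula = φ

/-- Boolean (purely propositional) formulas. -/
inductive BForm (P : Type) : Type
  | atom : P → BForm P
  | neg : BForm P → BForm P
  | or : BForm P → BForm P → BForm P

/-- Truth of a boolean formula under an assignment (set of true propositions). -/
def BForm.eval (v : Set P) : BForm P → Prop
  | .atom p => p ∈ v
  | .neg φ => ¬ φ.eval v
  | .or φ ψ => φ.eval v ∨ ψ.eval v

/-- The atomic propositions occurring in a boolean formula. -/
def BForm.atoms : BForm P → Set P
  | .atom p => {p}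
  | .neg φ => φ.atoms
  | .or φ ψ => φ.atoms ∪ ψ.atoms

/-- A boolean formula regarded as a CTL*K formula. -/
def BForm.toFormula : BForm P → Formula P A
  | .atom p => .atom p
  | .neg φ => .neg φ.toFormula
  | .or φ ψ => .or φ.toFormula ψ.toFormula

/-- The falsum constant `¬(p ∨ ¬p)`, expressed as a boolean formula. -/
def ffB [Inhabited P] : BForm P := .neg (.or (.atom default) (.neg (.atom default)))

/-- Conjunction of boolean formulas. -/
def bAnd (φ ψ : BForm P) : BForm P := .neg (.or (.neg φ) (.neg ψ))

end EpiSyn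
namespace EpiSyn

theorem pol_mono {S P A : Type} (I I' : IS S P A) (hsub : Subsystem I I') :
    ∀ (φ : Formula P A) (b : Bool), okPol φ b →
      ∀ r, r ∈ I.runs → ∀ m,
        (b = true → sat I' φ r m → sat I φ r m) ∧
        (b = false → sat I φ r m → sat I' φ r m) := by
  obtain ⟨hruns, hintp, hsim⟩ := hsub
  intro φ
  induction φ with
  | atom p =>
    intro b _ r hr m
    constructor <;> intro _ h <;> simpa [sat, hintp] using h
  | neg φ ih =>
    intro b hp r hr m
    have := ih (!b) hp r hr m
    cases b <;> simp only [sat, Bool.not_true, Bool.not_false] at this ⊢ <;>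
      constructor <;> intro hb h <;> simp_all <;> exact fun hh => h (this hh)
  | or φ ψ ihφ ihψ =>
    intro b hp r hr m
    have h1 := ihφ b hp.1 r hr m
    have h2 := ihψ b hp.2 r hr m
    cases b <;> simp_all [sat] <;> tauto
  | next φ ih =>
    intro b hp r hr m
    have := ih b hp r hr (m + 1)
    cases b <;> simp_all [sat]
  | untl φ ψ ihφ ihψ =>
    intro b hp r hr m
    constructor <;> intro hb h <;> subst hb <;>
      obtain ⟨m', hm', hψ, hφ⟩ := h <;>
      exact ⟨m', hm', by
        first
        | exact (ihψ _ hp.2 r hr m').1 rfl hψ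
        | exact (ihψ _ hp.2 r hr m').2 rfl hψ, fun k hk1 hk2 => by
        first
        | exact (ihφ _ hp.1 r hr k).1 rfl (hφ k hk1 hk2)
        | exact (ihφ _ hp.1 r hr k).2 rfl (hφ k hk1 hk2)⟩
  | all φ ih =>
    intro b hp r hr m
    obtain ⟨hb, hp2⟩ := hp
    subst hb
    refine ⟨fun _ h => ?_, fun hb => by simp at hb⟩
    intro r' hr' hagree
    exact (ih true hp2 r' hr' m).1 rfl (h r' (hruns hr') hagree)
  | know i φ ih =>
    intro b hp r hr m
    obtain ⟨hb, hp2⟩ := hp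
    subst hb
    refine ⟨fun _ h => ?_, fun hb => by simp at hb⟩
    intro r' hr' m' hs
    exact (ih true hp2 r' hr' m').1 rfl
      (h r' (hruns hr') m' ((hsim i r' m' r m hr' hr).mp hs))

/-- Lemma 1 of the paper. If `𝓘 ⊆ 𝓘'` are interpreted
systems over the same state set, `r` is a run of `𝓘`, `m ∈ ℕ`, and `φ` is a
CTL*K formula in which every occurrence of a knowledge operator `K_i` and of
the branching operator `A` is in positive position, then `𝓘',(r,m) ⊨ φ`
implies `𝓘,(r,m) ⊨ φ`. -/
theorem subsystem_positive_preservation {S P A : Type} [Finite P] [Finite A]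
    (I I' : IS S P A) (hsub : Subsystem I I')
    (r : ℕ → S) (hr : r ∈ I.runs) (m : ℕ)
    (φ : Formula P A) (hpos : Positive φ)
    (h : sat I' φ r m) : sat I φ r m := by
  exact (pol_mono I I' hsub φ true hpos r hr m).1 rfl h

end EpiSyn
end

section
/- Let E be an environment, P a joint protocol template, κ a map assigning to each template variable x ∈ Vars(P_i) a formula κ(x) of the form K_iψ, and θ a total substitution. Let 𝓘' be an interpreted system over the states of E with 𝓘(E,Pθ) ⊆ 𝓘', and let x ∈ Vars(P) be such that κ(x)θ is a formula of CTLK+. If 𝓘' ⊨ AG(θ(x) ⇔ κ(x)θ) then 𝓘(E,Pθ) ⊨ AG(θ(x) ⇒ κ(x)θ). -/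
namespace EpiSyn

variable {S P A Act Obs X : Type}

/-- An environment: initial states, a set of actions for each agent
(containing `skip`), a serial transition relation labelled by joint actions
(with the all-`skip` joint action acting as identity), an observation
function for each agent, and an interpretation of atomic propositions. -/
structure Env (S P A Act Obs : Type) where
  init : Set S
  acts : A → Set Act
  skip : Act
  skip_mem : ∀ i, skip ∈ acts i
  tr : S → (A → Act) → S → Prop
  serial : ∀ s (a : A → Act), (∀ i, a i ∈ acts i) → ∃ t, tr s a t
  skip_loop : ∀ s t, tr s (fun _ => skip) t ↔ s = t
  obs : A → S → Obs
  intp : S → Set P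

/-- Proposition `p` is local to agent `i`: its truth depends only on `i`'s observation. -/
def LocalProp (E : Env S P A Act Obs) (i : A) (p : P) : Prop :=
  ∀ s t, E.obs i s = E.obs i t → (p ∈ E.intp s ↔ p ∈ E.intp t)

/-- A boolean formula is local to agent `i` if all its propositions are. -/
def LocalBForm (E : Env S P A Act Obs) (i : A) (φ : BForm P) : Prop :=
  ∀ p ∈ φ.atoms, LocalProp E i p

/-- A concrete protocol for one agent: a finite list of guarded clauses `φ → a`. -/
abbrev Proto (P Act : Type) := List (BForm P × Act)

/-- Well-formedness of a joint concrete protocol: clause actions belong to the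
agent's action set and guards are local to the agent. -/
def ProtocolWF (E : Env S P A Act Obs) (Q : A → Proto P Act) : Prop :=
  ∀ i, ∀ c ∈ Q i, c.2 ∈ E.acts i ∧ LocalBForm E i c.1

/-- The set of actions enabled by protocol `Pi` at state `s`: the actions of
clauses whose guard holds at `s`; if no guard holds, just `skip`. -/
def en (E : Env S P A Act Obs) (Pi : Proto P Act) (s : S) : Set Act :=
  {α | (∃ c ∈ Pi, c.2 = α ∧ c.1.eval (E.intp s)) ∨
       (α = E.skip ∧ ∀ c ∈ Pi, ¬ c.1.eval (E.intp s))}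

/-- Runs of the joint protocol `Q` in the environment `E`. -/
def sysRuns (E : Env S P A Act Obs) (Q : A → Proto P Act) : Set (ℕ → S) :=
  {r | r 0 ∈ E.init ∧
    ∀ n, ∃ a : A → Act, (∀ i, a i ∈ en E (Q i) (r n)) ∧ E.tr (r n) a (r (n + 1))}

/-- The interpreted system `𝓘(E, Q)` generated by running joint protocol `Q`
in environment `E`, with the observational semantics for knowledge. -/
def sysIS (E : Env S P A Act Obs) (Q : A → Proto P Act) : IS S P A where
  runs := sysRuns E Q
  sim := fun i p q => E.obs i (p.1 p.2) = E.obs i (q.1 q.2)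
  intp := E.intp
  sim_refl := fun _ _ _ _ => rfl
  sim_symm := fun _ _ _ _ _ h => h.symm
  sim_trans := fun _ _ _ _ _ _ _ h h' => h.trans h'

/-- A protocol template for one agent: guards are boolean formulas over the
atomic propositions together with boolean template variables from `X`. -/
abbrev ProtoT (P X Act : Type) := List (BForm (P ⊕ X) × Act)

/-- Well-formedness of a joint protocol template with variable-ownership map
`owner`: clause actions belong to the agent's action set, the atomic
propositions in guards of agent `i`'s template are local to `i`, and the
template variables occurring in it are owned by `i` (so the variable sets of
distinct agents are disjoint). -/
def TemplateWF (E : Env S P A Act Obs) (owner : X → A)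
    (Pt : A → ProtoT P X Act) : Prop :=
  ∀ i, ∀ c ∈ Pt i, c.2 ∈ E.acts i ∧
    ∀ q ∈ c.1.atoms, Sum.elim (fun p => LocalProp E i p) (fun x => owner x = i) q

/-- Application of a (total) substitution to a template guard. -/
def substB (θ : X → BForm P) : BForm (P ⊕ X) → BForm P
  | .atom (.inl p) => .atom p
  | .atom (.inr x) => θ x
  | .neg φ => .neg (substB θ φ)
  | .or φ ψ => .or (substB θ φ) (substB θ ψ)

/-- Application of a (total) substitution to a joint protocol template,
yielding a joint concrete protocol `Pθ`. -/
def substT (θ : X → BForm P) (Pt : A → ProtoT P X Act) : A → Proto P Act :=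
  fun i => (Pt i).map (fun c => (substB θ c.1, c.2))

/-- Application of a (total) substitution to a CTL*K formula over `Prop ∪ X`. -/
def substF (θ : X → BForm P) : Formula (P ⊕ X) A → Formula P A
  | .atom (.inl p) => .atom p
  | .atom (.inr x) => (θ x).toFormula
  | .neg φ => .neg (substF θ φ)
  | .or φ ψ => .or (substF θ φ) (substF θ ψ)
  | .next φ => .next (substF θ φ)
  | .untl φ ψ => .untl (substF θ φ) (substF θ ψ)
  | .all φ => .all (substF θ φ)
  | .know i φ => .know i (substF θ φ)

/-- A total substitution is well-formed if it assigns to each template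
variable a boolean formula local to the agent owning that variable. -/
def SubstWF (E : Env S P A Act Obs) (owner : X → A) (θ : X → BForm P) : Prop :=
  ∀ x, LocalBForm E (owner x) (θ x)

/-- A partial substitution is well-formed if every assigned formula is local
to the agent owning the corresponding variable. -/
def PSubstWF (E : Env S P A Act Obs) (owner : X → A) (θ : X → Option (BForm P)) : Prop :=
  ∀ x b, θ x = some b → LocalBForm E (owner x) b

end EpiSyn
namespace EpiSyn

section Aux

variable {S P A : Type}

lemma sat_tt [Inhabited P] (I : IS S P A) (r : ℕ → S) (m : ℕ) :
    sat I (ttF : Formula P A) r m := by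
  show sat I (.atom default) r m ∨ ¬ sat I (.atom default) r m
  exact em _

lemma sat_Gf [Inhabited P] (I : IS S P A) (φ : Formula P A) (r : ℕ → S) (n : ℕ) :
    sat I (Gf φ) r n ↔ ∀ m, n ≤ m → sat I φ r m := by
  constructor
  · intro h m hm
    by_contra hc
    exact h ⟨m, hm, hc, fun k _ _ => sat_tt I r k⟩
  · rintro h ⟨m, hm, hns, -⟩
    exact hns (h m hm)

lemma sat_bform (I : IS S P A) (b : BForm P) (r : ℕ → S) (m : ℕ) :
    sat I (b.toFormula : Formula P A) r m ↔ b.eval (I.intp (r m)) := by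
  induction b with
  | atom p => rfl
  | neg φ ih => show ¬ _ ↔ ¬ _; rw [ih]
  | or φ ψ ih1 ih2 => show _ ∨ _ ↔ _ ∨ _; rw [ih1, ih2]

lemma sat_and (I : IS S P A) (a b : Formula P A) (r : ℕ → S) (m : ℕ) :
    sat I (Formula.and a b) r m ↔ sat I a r m ∧ sat I b r m := by
  show ¬ (¬ _ ∨ ¬ _) ↔ _
  tauto

/-- CTLK⁺ formulas are preserved from a system to a subsystem. -/
lemma preserve [Inhabited P] {I I' : IS S P A} (h : Subsystem I I')
    (c : CTLKp P A) : ∀ r ∈ I.runs, ∀ m,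
    sat I' c.toFormula r m → sat I c.toFormula r m := by
  induction c with
  | atom p =>
    intro r _ m hs
    show p ∈ I.intp (r m)
    rw [h.2.1]; exact hs
  | natom p =>
    intro r _ m hs hc
    refine hs (show p ∈ I'.intp (r m) from ?_)
    rw [← h.2.1]; exact hc
  | or φ ψ ih1 ih2 =>
    rintro r hr m (hs | hs)
    · exact Or.inl (ih1 r hr m hs)
    · exact Or.inr (ih2 r hr m hs)
  | and φ ψ ih1 ih2 =>
    intro r hr m hs
    rw [CTLKp.toFormula, sat_and] at hs ⊢
    exact ⟨ih1 r hr m hs.1, ih2 r hr m hs.2⟩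
  | ax φ ih =>
    intro r hr m hs r' hr' hag
    exact ih r' hr' (m + 1) (hs r' (h.1 hr') hag)
  | af φ ih =>
    intro r hr m hs r' hr' hag
    obtain ⟨m', hm', hψ, -⟩ := hs r' (h.1 hr') hag
    exact ⟨m', hm', ih r' hr' m' hψ, fun k _ _ => sat_tt I r' k⟩
  | ag φ ih =>
    intro r hr m hs r' hr' hag
    rw [sat_Gf]
    intro k hk
    exact ih r' hr' k ((sat_Gf I' _ r' m).1 (hs r' (h.1 hr') hag) k hk)
  | au φ ψ ih1 ih2 =>
    intro r hr m hs r' hr' hag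
    obtain ⟨m', hm', hψ, hφ⟩ := hs r' (h.1 hr') hag
    exact ⟨m', hm', ih2 r' hr' m' hψ, fun k h1 h2 => ih1 r' hr' k (hφ k h1 h2)⟩
  | ar φ ψ ih1 ih2 =>
    intro r hr m hs r' hr' hag hex
    obtain ⟨m', hm', hψ, hφ⟩ := hex
    exact hs r' (h.1 hr') hag
      ⟨m', hm', fun hc => hψ (ih2 r' hr' m' hc),
        fun k h1 h2 hc => hφ k h1 h2 (ih1 r' hr' k hc)⟩
  | know i φ ih =>
    intro r hr m hs r' hr' m' hsim
    refine ih r' hr' m' (hs r' (h.1 hr') m' ?_)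
    exact (h.2.2 i r' m' r m hr' hr).1 hsim

end Aux

/-- Let `E` be an environment, `Pt` a joint protocol
template, `κ` a map assigning to each template variable `x` owned by agent `i`
a formula `κ(x) = K_i ψ` (here `κ x = know (owner x) (ψκ x)`), and `θ` a total
substitution. Let `𝓘'` be an interpreted system over the states of `E` with
`𝓘(E,Pθ) ⊆ 𝓘'`, and let `x` be a template variable such that `κ(x)θ` is a
formula of CTLK⁺. If `𝓘' ⊨ AG(θ(x) ⇔ κ(x)θ)` then
`𝓘(E,Pθ) ⊨ AG(θ(x) ⇒ κ(x)θ)`. -/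
theorem approx_iff_implies_sound {S P A Act Obs X : Type}
    [Inhabited P] [Finite S] [Finite P] [Finite A] [Finite Act]
    (E : Env S P A Act Obs) (owner : X → A)
    (Pt : A → ProtoT P X Act) (hPt : TemplateWF E owner Pt)
    (ψκ : X → Formula (P ⊕ X) A)
    (θ : X → BForm P) (hθ : SubstWF E owner θ)
    (I' : IS S P A) (hsub : Subsystem (sysIS E (substT θ Pt)) I')
    (x : X)
    (hfrag : InCTLKplus (substF θ (Formula.know (owner x) (ψκ x))))
    (hiff : valid I'
      (AGf (Formula.iff ((θ x).toFormula)
        (substF θ (Formula.know (owner x) (ψκ x)))))) :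
    valid (sysIS E (substT θ Pt))
      (AGf (Formula.imp ((θ x).toFormula)
        (substF θ (Formula.know (owner x) (ψκ x))))) := by
  set I := sysIS E (substT θ Pt) with hI
  set κ := substF θ (Formula.know (owner x) (ψκ x)) with hκ
  intro r hr r' hr' hag
  rw [sat_Gf]
  intro m _
  show ¬ sat I ((θ x).toFormula) r' m ∨ sat I κ r' m
  by_cases hθx : sat I ((θ x).toFormula) r' m
  · right
    have hθx' : sat I' ((θ x).toFormula) r' m := by
      rw [sat_bform] at hθx ⊢
      rwa [← hsub.2.1]
    have h0 : sat I' (AGf (Formula.iff ((θ x).toFormula) κ)) r' 0 :=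
      hiff r' (hsub.1 hr')
    have h1 : sat I' (Formula.iff ((θ x).toFormula) κ) r' m := by
      have := h0 r' (hsub.1 hr') (fun k _ => rfl)
      exact (sat_Gf I' _ r' 0).1 this m (Nat.zero_le m)
    rw [Formula.iff, sat_and] at h1
    have hκ' : sat I' κ r' m := by
      rcases h1.1 with h | h
      · exact absurd hθx' h
      · exact h
    obtain ⟨c, hc⟩ := hfrag
    have hc' : sat I' c.toFormula r' m := by rw [hc]; exact hκ'
    have hres := preserve hsub c r' hr' m hc'
    rw [hc] at hres
    exact hres
  · exact Or.inl hθx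

end EpiSyn
end

section
/- Let 𝓘'' ⊆ 𝓘' be interpreted systems over the same state set, let ψ be a CTL*K formula containing knowledge operators and the branching operator A only in positive position, and let φ' and φ'' be purely propositional (boolean) formulas. If 𝓘' ⊨ AG(φ' ⇔ ψ) and 𝓘'' ⊨ AG(φ'' ⇔ ψ), then 𝓘'' ⊨ AG(φ' ⇒ φ''). -/
namespace EpiSyn

variable {S P A : Type}

lemma bsat (I : IS S P A) (b : BForm P) (r : ℕ → S) (m : ℕ) :
    sat I (b.toFormula) r m ↔ b.eval (I.intp (r m)) := by
  induction b with
  | atom p => exact Iff.rfl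
  | neg φ ih => simp [BForm.toFormula, BForm.eval, sat, ih]
  | or φ ψ ih1 ih2 => simp [BForm.toFormula, BForm.eval, sat, ih1, ih2]

lemma ttF_sat [Inhabited P] (I : IS S P A) (r : ℕ → S) (m : ℕ) :
    sat I ttF r m := by
  show _ ∨ ¬ _
  exact em _

lemma G_iff [Inhabited P] (I : IS S P A) (χ : Formula P A) (r : ℕ → S) :
    sat I (Gf χ) r 0 ↔ ∀ m, sat I χ r m := by
  show (¬ ∃ m', 0 ≤ m' ∧ ¬ sat I χ r m' ∧ _) ↔ _
  push_neg
  constructor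
  · intro h m
    by_contra hc
    obtain ⟨k, _, _, hk⟩ := h m (Nat.zero_le m) hc
    exact hk (ttF_sat I r k)
  · intro h m _ hc
    exact absurd (h m) hc

/-- From validity of `AG χ`, truth of `χ` at every point of every run. -/
lemma valid_AG [Inhabited P] (I : IS S P A) (χ : Formula P A)
    (h : valid I (AGf χ)) : ∀ r ∈ I.runs, ∀ m, sat I χ r m := by
  intro r hr m
  have := h r hr r hr (fun _ _ => rfl)
  exact (G_iff I χ r).mp this m

/-- Monotonicity with respect to subsystems, by polarity. -/
lemma mono (I'' I' : IS S P A) (hsub : Subsystem I'' I') :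
    ∀ (χ : Formula P A) (b : Bool), okPol χ b → ∀ r ∈ I''.runs, ∀ m,
      (b = true → sat I' χ r m → sat I'' χ r m) ∧
      (b = false → sat I'' χ r m → sat I' χ r m) := by
  intro χ
  induction χ with
  | atom p =>
    intro b _ r hr m
    have : sat I'' (.atom p) r m ↔ sat I' (.atom p) r m := by
      show p ∈ I''.intp (r m) ↔ p ∈ I'.intp (r m)
      rw [hsub.2.1]
    constructor <;> intro _ h
    · exact this.mpr h
    · exact this.mp h
  | neg φ ih =>
    intro b hok r hr m
    have H := ih (!b) hok r hr m
    cases b with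
    | true =>
      refine ⟨fun _ h h' => h (H.2 rfl h'), fun h => by simp at h⟩
    | false =>
      refine ⟨fun h => by simp at h, fun _ h h' => h (H.1 rfl h')⟩
  | or φ ψ ih1 ih2 =>
    intro b hok r hr m
    have H1 := ih1 b hok.1 r hr m
    have H2 := ih2 b hok.2 r hr m
    constructor <;> intro hb h <;> rcases h with h | h
    · exact Or.inl (H1.1 hb h)
    · exact Or.inr (H2.1 hb h)
    · exact Or.inl (H1.2 hb h)
    · exact Or.inr (H2.2 hb h)
  | next φ ih =>
    intro b hok r hr m
    have H := ih b hok r hr (m + 1)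
    exact ⟨fun hb h => H.1 hb h, fun hb h => H.2 hb h⟩
  | untl φ ψ ih1 ih2 =>
    intro b hok r hr m
    constructor <;> intro hb h <;> obtain ⟨m', hm', hψ, hφ⟩ := h
    · exact ⟨m', hm', (ih2 b hok.2 r hr m').1 hb hψ,
        fun k h1 h2 => (ih1 b hok.1 r hr k).1 hb (hφ k h1 h2)⟩
    · exact ⟨m', hm', (ih2 b hok.2 r hr m').2 hb hψ,
        fun k h1 h2 => (ih1 b hok.1 r hr k).2 hb (hφ k h1 h2)⟩
  | all φ ih =>
    intro b hok r hr m
    obtain ⟨hb, hok'⟩ := hok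
    subst hb
    refine ⟨fun _ h r' hr' hag => ?_, fun h => by simp at h⟩
    exact (ih true hok' r' hr' m).1 rfl (h r' (hsub.1 hr') hag)
  | know i φ ih =>
    intro b hok r hr m
    obtain ⟨hb, hok'⟩ := hok
    subst hb
    refine ⟨fun _ h r' hr' m' hsim => ?_, fun h => by simp at h⟩
    have hsim' : I'.sim i (r', m') (r, m) := (hsub.2.2 i r' m' r m hr' hr).mp hsim
    exact (ih true hok' r' hr' m').1 rfl (h r' (hsub.1 hr') m' hsim')

/-- Let `𝓘'' ⊆ 𝓘'` be interpreted systems over the same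
state set, `ψ` a CTL*K formula containing knowledge operators and the
branching operator `A` only in positive position, and `φ'`, `φ''` purely
propositional formulas. If `𝓘' ⊨ AG(φ' ⇔ ψ)` and `𝓘'' ⊨ AG(φ'' ⇔ ψ)`,
then `𝓘'' ⊨ AG(φ' ⇒ φ'')`. -/
theorem smaller_system_weaker_equivalent {S P A : Type}
    [Inhabited P] [Finite P] [Finite A]
    (I'' I' : IS S P A) (hsub : Subsystem I'' I')
    (ψ : Formula P A) (hpos : Positive ψ)
    (φ' φ'' : BForm P)
    (h1 : valid I' (AGf (Formula.iff (φ'.toFormula) ψ)))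
    (h2 : valid I'' (AGf (Formula.iff (φ''.toFormula) ψ))) :
    valid I'' (AGf (Formula.imp (φ'.toFormula) (φ''.toFormula))) := by
  intro r hr r' hr' _
  rw [G_iff]
  intro m
  show ¬ sat I'' (φ'.toFormula) r' m ∨ sat I'' (φ''.toFormula) r' m
  by_cases hφ' : sat I'' (φ'.toFormula) r' m
  · right
    -- φ' holds, transfer to I'
    have hφ'I' : sat I' (φ'.toFormula) r' m := by
      rw [bsat] at hφ' ⊢
      rwa [← hsub.2.1]
    -- from h1: φ' ⇔ ψ at (r', m) in I'
    have hiff1 := valid_AG I' _ h1 r' (hsub.1 hr') m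
    have hψ : sat I' ψ r' m := by
      have : ¬ ((¬ (¬ sat I' (φ'.toFormula) r' m ∨ sat I' ψ r' m)) ∨
          (¬ (¬ sat I' ψ r' m ∨ sat I' (φ'.toFormula) r' m))) := hiff1
      tauto
    -- monotonicity: ψ positive
    have hψ'' : sat I'' ψ r' m :=
      (mono I'' I' hsub ψ true hpos r' hr' m).1 rfl hψ
    -- from h2: φ'' ⇔ ψ at (r', m) in I''
    have hiff2 := valid_AG I'' _ h2 r' hr' m
    have : ¬ ((¬ (¬ sat I'' (φ''.toFormula) r' m ∨ sat I'' ψ r' m)) ∨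
        (¬ (¬ sat I'' ψ r' m ∨ sat I'' (φ''.toFormula) r' m))) := hiff2
    tauto
  · left; exact hφ'

end EpiSyn
end

section
/- Consider the environment E with agents Ags = {A,B}, propositions Prop = {start, w, c}, actions Acts_A = Acts_B = {aw, ac, ap, skip}, states S = {s₀, s_w, s_c, s_wc}, initial states I = {s₀}, observations O_A(s) = O_B(s) = s for every s, interpretation π(s₀) = {start}, π(s_w) = {w}, π(s_c) = {c}, π(s_wc) = {w,c}, and transition relation: s₀ →^{(a,b)} s_w if a = b = aw; s₀ →^{(a,b)} s_c if a = b = ac; s₀ →^{(a,b)} s_wc if {a,b} = {aw,ac}; t →^{(a,b)} t for every t ∈ {s_w, s_c, s_wc} and every joint action (a,b); and s₀ →^{(a,b)} s₀ for every joint action (a,b) not of the three forms above. Each agent i ∈ {A,B} has the protocol template P_i = do start∧x_i → ac [] start∧¬x_i → aw [] ¬start → ap od. Then there is no substitution θ (assigning to each template variable x_i a boolean formula local to agent i) such that 𝓘(E,Pθ) ⊨ AG(θ(x_i) ⇔ K_i(AX w)) for both i = A and i = B; that is, the knowledge-based program with specification formulas AG(x_i ⇔ K_i AX w) for i ∈ {A,B}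 has no implementation in E. -/
namespace EpiSyn

/-! ### The picnic environment of Example 2 -/

/-- States: `s0` (start), `sw` (wine only), `sc` (cheese only), `swc` (both). -/
inductive PicSt : Type | s0 | sw | sc | swc
  deriving DecidableEq

instance : Fintype PicSt where
  elems := {PicSt.s0, PicSt.sw, PicSt.sc, PicSt.swc}
  complete := fun x => by cases x <;> simp

/-- Agents Alice and Bob. -/
inductive PicAg : Type | A | B
  deriving DecidableEq

instance : Fintype PicAg where
  elems := {PicAg.A, PicAg.B}
  complete := fun x => by cases x <;> simp

/-- Actions: bring wine, bring cheese, picnic, skip. -/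
inductive PicAc : Type | aw | ac | ap | skip
  deriving DecidableEq

instance : Fintype PicAc where
  elems := {PicAc.aw, PicAc.ac, PicAc.ap, PicAc.skip}
  complete := fun x => by cases x <;> simp

/-- Atomic propositions `start`, `w`, `c`. -/
inductive PicPr : Type | start | w | c
  deriving DecidableEq

instance : Inhabited PicPr := ⟨PicPr.start⟩

/-- The transition relation: from `s0`, both bringing wine leads to `sw`,
both bringing cheese to `sc`, one of each to `swc`, and any other joint
action loops at `s0`; each of `sw`, `sc`, `swc` loops under every joint
action. -/
def picTr : PicSt → (PicAg → PicAc) → PicSt → Prop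
  | .s0, a, t =>
      (a .A = .aw ∧ a .B = .aw ∧ t = .sw) ∨
      (a .A = .ac ∧ a .B = .ac ∧ t = .sc) ∨
      (((a .A = .aw ∧ a .B = .ac) ∨ (a .A = .ac ∧ a .B = .aw)) ∧ t = .swc) ∨
      (¬ (a .A = .aw ∧ a .B = .aw) ∧ ¬ (a .A = .ac ∧ a .B = .ac) ∧
        ¬ ((a .A = .aw ∧ a .B = .ac) ∨ (a .A = .ac ∧ a .B = .aw)) ∧ t = .s0)
  | .sw, _, t => t = .sw
  | .sc, _, t => t = .sc
  | .swc, _, t => t = .swc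

instance : ∀ s a t, Decidable (picTr s a t) := fun s a t => by
  cases s <;> dsimp [picTr] <;> infer_instance

/-- The interpretation: `start` holds at `s0`, `w` at the states with wine,
`c` at the states with cheese. -/
def picIntp : PicSt → Set PicPr
  | .s0 => {PicPr.start}
  | .sw => {PicPr.w}
  | .sc => {PicPr.c}
  | .swc => {PicPr.w, PicPr.c}

/-- The picnic environment: initial state `s0`, all four actions available to
both agents, both agents observe the full state. -/
def picEnv : Env PicSt PicPr PicAg PicAc PicSt where
  init := {PicSt.s0}
  acts := fun _ => Set.univ
  skip := PicAc.skip
  skip_mem := fun _ => Set.mem_univ _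
  tr := picTr
  serial := fun s a _ =>
    (by decide : ∀ (s : PicSt) (a : PicAg → PicAc), ∃ t, picTr s a t) s a
  skip_loop := by decide
  obs := fun _ s => s
  intp := picIntp

/-- Agent `i`'s protocol template:
`do start ∧ x_i → ac [] start ∧ ¬x_i → aw [] ¬start → ap od`,
with template variable `x_i` identified with the agent `i` itself. -/
def picTemplate : PicAg → ProtoT PicPr PicAg PicAc := fun i =>
  [ (bAnd (BForm.atom (Sum.inl PicPr.start)) (BForm.atom (Sum.inr i)), PicAc.ac),
    (bAnd (BForm.atom (Sum.inl PicPr.start)) (BForm.neg (BForm.atom (Sum.inr i))), PicAc.aw),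
    (BForm.neg (BForm.atom (Sum.inl PicPr.start)), PicAc.ap) ]

/-! The specification forces, for both agents, `x_i ↔ ¬(x_A ∧ x_B)` at the initial state,
where `x_i` is the truth value of `θ i` there; no pair of truth values satisfies both.
Indeed, at `s0` agent `i` brings cheese if `x_i` holds and wine otherwise, so every successor
of `s0` satisfies `w` exactly when not both agents bring cheese; as every agent observes the
full state, `K_i (AX w)` holds at `s0` exactly in that case. -/

variable {S P A Act Obs : Type}

lemma sat_toFormula (I : IS S P A) (b : BForm P) (r : ℕ → S) (m : ℕ) :
    sat I b.toFormula r m ↔ b.eval (I.intp (r m)) := by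
  induction b with
  | atom p => exact Iff.rfl
  | neg φ ih => exact not_congr ih
  | or φ ψ ih₁ ih₂ => exact or_congr ih₁ ih₂

lemma sat_iff (I : IS S P A) (φ ψ : Formula P A) (r : ℕ → S) (m : ℕ) :
    sat I (φ.iff ψ) r m ↔ (sat I φ r m ↔ sat I ψ r m) := by
  simp only [Formula.iff, Formula.and, Formula.imp, sat]
  tauto

lemma sat_zero_of_valid_AGf [Inhabited P] {I : IS S P A} {φ : Formula P A} {r : ℕ → S}
    (hr : r ∈ I.runs) (hv : valid I (AGf φ)) : sat I φ r 0 := by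
  by_contra hφ
  exact hv r hr r hr (fun _ _ => rfl) ⟨0, le_rfl, hφ, fun _ h₀ h₁ => absurd h₁ (by omega)⟩

lemma en_nonempty (E : Env S P A Act Obs) (Pi : Proto P Act) (s : S) :
    (en E Pi s).Nonempty := by
  by_cases h : ∃ c ∈ Pi, c.1.eval (E.intp s)
  · obtain ⟨c, hc, hs⟩ := h
    exact ⟨c.2, Or.inl ⟨c, hc, rfl, hs⟩⟩
  · exact ⟨E.skip, Or.inr ⟨rfl, fun c hc hs => h ⟨c, hc, hs⟩⟩⟩

lemma en_subset_acts (E : Env S P A Act Obs) {Pi : Proto P Act} {i : A} {s : S}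
    (hPi : ∀ c ∈ Pi, c.2 ∈ E.acts i) : en E Pi s ⊆ E.acts i := by
  rintro α (⟨c, hc, rfl, -⟩ | ⟨rfl, -⟩)
  exacts [hPi c hc, E.skip_mem i]

lemma sysRuns_nonempty {E : Env S P A Act Obs} {Q : A → Proto P Act}
    (hinit : E.init.Nonempty) (hQ : ∀ i, ∀ c ∈ Q i, c.2 ∈ E.acts i) :
    (sysRuns E Q).Nonempty := by
  have hstep : ∀ s, ∃ t, ∃ a : A → Act, (∀ i, a i ∈ en E (Q i) s) ∧ E.tr s a t := fun s => by
    let a : A → Act := fun i => (en_nonempty E (Q i) s).some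
    have ha : ∀ i, a i ∈ en E (Q i) s := fun i => (en_nonempty E (Q i) s).some_mem
    obtain ⟨t, ht⟩ := E.serial s a fun i => en_subset_acts E (hQ i) (ha i)
    exact ⟨t, a, ha, ht⟩
  choose next hnext using hstep
  obtain ⟨s₀, hs₀⟩ := hinit
  refine ⟨fun n => next^[n] s₀, hs₀, fun n => ?_⟩
  simpa only [Function.iterate_succ_apply'] using hnext (next^[n] s₀)

/-- The guard `x_i` of agent `i` holds at `s0`, so that agent `i` takes `ac` there, not `aw`. -/
abbrev BringsCheese (θ : PicAg → BForm PicPr) (i : PicAg) : Prop :=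
  (θ i).eval (picIntp PicSt.s0)

lemma mem_en_s0_iff (θ : PicAg → BForm PicPr) (i : PicAg) (α : PicAc) :
    α ∈ en picEnv (substT θ picTemplate i) PicSt.s0 ↔
      (BringsCheese θ i ∧ α = PicAc.ac) ∨ (¬ BringsCheese θ i ∧ α = PicAc.aw) := by
  have hstart : PicPr.start ∈ picIntp PicSt.s0 := rfl
  by_cases hx : BringsCheese θ i <;>
    simp [en, substT, picTemplate, substB, bAnd, BForm.eval, picEnv, hstart, hx, eq_comm]

lemma w_mem_picIntp_iff_of_picTr_s0 {xA xB : Prop} {a : PicAg → PicAc} {t : PicSt}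
    (hA : (xA ∧ a PicAg.A = PicAc.ac) ∨ (¬ xA ∧ a PicAg.A = PicAc.aw))
    (hB : (xB ∧ a PicAg.B = PicAc.ac) ∨ (¬ xB ∧ a PicAg.B = PicAc.aw))
    (ht : picTr PicSt.s0 a t) :
    PicPr.w ∈ picIntp t ↔ ¬ (xA ∧ xB) := by
  rcases hA with ⟨hxA, hA⟩ | ⟨hxA, hA⟩ <;> rcases hB with ⟨hxB, hB⟩ | ⟨hxB, hB⟩ <;>
    simp [picTr, hA, hB] at ht <;> subst ht <;> simp [picIntp, hxA, hxB]

lemma w_mem_succ_iff {θ : PicAg → BForm PicPr} {r : ℕ → PicSt}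
    (hr : r ∈ sysRuns picEnv (substT θ picTemplate)) {n : ℕ} (hn : r n = PicSt.s0) :
    PicPr.w ∈ picIntp (r (n + 1)) ↔ ¬ (BringsCheese θ PicAg.A ∧ BringsCheese θ PicAg.B) := by
  obtain ⟨a, ha, ht⟩ := hr.2 n
  rw [hn] at ha ht
  exact w_mem_picIntp_iff_of_picTr_s0 ((mem_en_s0_iff θ _ _).1 (ha _))
    ((mem_en_s0_iff θ _ _).1 (ha _)) ht

lemma sat_know_AXf_w_iff {θ : PicAg → BForm PicPr} {r : ℕ → PicSt}
    (hr : r ∈ sysRuns picEnv (substT θ picTemplate)) {m : ℕ} (hm : r m = PicSt.s0)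
    (i : PicAg) :
    sat (sysIS picEnv (substT θ picTemplate)) (.know i (AXf (.atom PicPr.w))) r m ↔
      ¬ (BringsCheese θ PicAg.A ∧ BringsCheese θ PicAg.B) := by
  refine ⟨fun hK => (w_mem_succ_iff hr hm).1 (hK r hr m rfl r hr fun _ _ => rfl), ?_⟩
  intro hnot r' _ m' hobs r'' hr'' hagree
  have hs0 : r'' m' = PicSt.s0 := (hagree m' le_rfl).trans (hobs.trans hm)
  exact (w_mem_succ_iff hr'' hs0).2 hnot

/-- Example 2 of the paper. There is no substitution `θ`
(assigning to each template variable `x_i` a boolean formula local to agent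
`i`) such that `𝓘(E,Pθ) ⊨ AG(θ(x_i) ⇔ K_i (AX w))` for both `i = A` and
`i = B`: the picnic knowledge-based program has no implementation. -/
theorem picnic_no_implementation :
    ¬ ∃ θ : PicAg → BForm PicPr,
      (∀ i, LocalBForm picEnv i (θ i)) ∧
      ∀ i : PicAg,
        valid (sysIS picEnv (substT θ picTemplate))
          (AGf (Formula.iff ((θ i).toFormula)
            (Formula.know i (AXf (Formula.atom PicPr.w))))) := by
  rintro ⟨θ, -, hspec⟩
  obtain ⟨r, hr⟩ := sysRuns_nonempty (E := picEnv) (Q := substT θ picTemplate)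
    ⟨PicSt.s0, rfl⟩ fun _ _ _ => Set.mem_univ _
  have hr0 : r 0 = PicSt.s0 := hr.1
  have hfix : ∀ i, BringsCheese θ i ↔ ¬ (BringsCheese θ PicAg.A ∧ BringsCheese θ PicAg.B) :=
    fun i => by
      have h := (sat_iff _ _ _ r 0).1 (sat_zero_of_valid_AGf hr (hspec i))
      rwa [sat_toFormula, sat_know_AXf_w_iff hr hr0, hr0] at h
  have hA := hfix PicAg.A
  have hB := hfix PicAg.B
  tauto

end EpiSyn
end

section
/- Consider the environment E with a single agent 1, actions Acts_1 = {a, b, skip}, states S = {s₀, s₁, s₂}, initial states I = {s₀}, observation O_1(s) = s for every s, and transition relation: s₀ →^a s₁, s₀ →^b s₂, s₁ →^a s₁, s₁ →^b s₁, s₂ →^a s₂, s₂ →^b s₂, and s →^{skip} s for every s. Let P be the protocol template do x → a [] ¬x → b od for agent 1 (x a template variable), and let θ be the empty partial substitution. Define the top strategy σ_⊤ by σ_⊤(s₀…s_k) = {t : s_k →^α t for some action α ∈ Acts_1}. Then for every memory definition μ, the strategy σ_⊤ is not substitution consistent with respect to P, θ and μ. -/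
namespace EpiSyn

variable {S P A Act Obs X : Type}

/-- A strategy for environment `E`: maps each nonempty sequence of states
(represented as a proper prefix `pre` together with the last state `s`)
to a nonempty set of possible successor states, each reachable from the
last state by some joint action. -/
structure Strategy (E : Env S P A Act Obs) where
  next : List S → S → Set S
  nonemp : ∀ pre s, (next pre s).Nonempty
  tr_ok : ∀ pre s t, t ∈ next pre s →
      ∃ a : A → Act, (∀ i, a i ∈ E.acts i) ∧ E.tr s a t

/-- A memory definition: for each agent, a function on nonempty sequences of
states (represented as prefix and last state). -/
structure MemoryDef (S A : Type) where
  M : A → Type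
  mem : (i : A) → List S → S → M i

/-- The strategy `σ` depends on the memory definition `μ`: there are functions
`F i : range (μ i) → 𝒫(Acts i)` such that the possible successors after a
sequence are exactly the states reached by joint actions whose components are
selected by the `F i` applied to the agents' memories of the sequence. -/
def DependsOn (E : Env S P A Act Obs) (σ : Strategy E) (μ : MemoryDef S A) : Prop :=
  ∃ F : (i : A) → μ.M i → Set Act,
    (∀ i m, F i m ⊆ E.acts i) ∧
    ∀ pre s t, t ∈ σ.next pre s ↔
      ∃ a : A → Act, E.tr s a t ∧ ∀ i, a i ∈ F i (μ.mem i pre s)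

/-- Truth of a template guard at assignment `val`, where a partial
substitution `θ` interprets some template variables as boolean formulas and
the completion `v` assigns truth values to the remaining ones. -/
def evalT (val : Set P) (θ : X → Option (BForm P)) (v : X → Bool) :
    BForm (P ⊕ X) → Prop
  | .atom (.inl p) => p ∈ val
  | .atom (.inr x) =>
      match θ x with
      | some b => b.eval val
      | none => v x = true
  | .neg φ => ¬ evalT val θ v φ
  | .or φ ψ => evalT val θ v φ ∨ evalT val θ v ψ

/-- Actions enabled at `s` by agent `i`'s protocol template under the partial
substitution `θ` completed by the truth-value assignment `v`. -/
def enT (E : Env S P A Act Obs) (Pi : ProtoT P X Act)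
    (θ : X → Option (BForm P)) (v : X → Bool) (s : S) : Set Act :=
  {α | (∃ c ∈ Pi, c.2 = α ∧ evalT (E.intp s) θ v c.1) ∨
       (α = E.skip ∧ ∀ c ∈ Pi, ¬ evalT (E.intp s) θ v c.1)}

/-- `σ` is substitution consistent with respect to the joint protocol
template `Pt`, the partial substitution `θ` and the memory definition `μ`:
`σ` depends on `μ` and, for every sequence, there is an extension `θ'` of `θ`
assigning truth values to the template variables on which `θ` is undefined
such that the successors prescribed by `σ` are exactly those reached by
joint actions enabled by `Pθ'` at the last state. -/
def SubstConsistent (E : Env S P A Act Obs) (Pt : A → ProtoT P X Act)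
    (θ : X → Option (BForm P)) (σ : Strategy E) (μ : MemoryDef S A) : Prop :=
  DependsOn E σ μ ∧
  ∀ pre s, ∃ v : X → Bool,
    σ.next pre s = {t | ∃ a : A → Act, (∀ i, a i ∈ enT E (Pt i) θ v s) ∧ E.tr s a t}

inductive InfoMode : Type | pi | ii

inductive RecallMode : Type | pr | ir

/-- The four memory definitions `μ^{a,b}` for information mode `a` and
recall mode `b`. -/
def memOf (E : Env S P A Act Obs) : InfoMode → RecallMode → MemoryDef S A
  | .pi, .pr => ⟨fun _ => List S × S, fun _ pre s => (pre, s)⟩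
  | .pi, .ir => ⟨fun _ => S, fun _ _ s => s⟩
  | .ii, .pr => ⟨fun _ => List Obs × Obs, fun i pre s => (pre.map (E.obs i), E.obs i s)⟩
  | .ii, .ir => ⟨fun _ => Obs, fun i _ s => E.obs i s⟩

/-- `Σ^{a,b,sc}(Pt, θ, E)` : the strategies that depend on `μ^{a,b}` and are
substitution consistent with respect to `Pt`, `θ` and `μ^{a,b}`. -/
def SigmaSC (E : Env S P A Act Obs) (Pt : A → ProtoT P X Act)
    (θ : X → Option (BForm P)) (a : InfoMode) (b : RecallMode) : Set (Strategy E) :=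
  {σ | SubstConsistent E Pt θ σ (memOf E a b)}

/-- `Σ^{a,b,nsc}(Pt, θ, E)` : the strategies that depend on `μ^{a,b}`
(no substitution-consistency requirement). -/
def SigmaNSC (E : Env S P A Act Obs) (a : InfoMode) (b : RecallMode) : Set (Strategy E) :=
  {σ | DependsOn E σ (memOf E a b)}

/-- The runs of the interpreted system `𝓘(Σ, E)` generated by a set `Σ` of
strategies: each run uses a fixed strategy of `Σ`, encoded in the state. -/
def stratRuns (E : Env S P A Act Obs) (Strats : Set (Strategy E)) :
    Set (ℕ → S × Strategy E) :=
  {r | ∃ σ ∈ Strats, ∃ sq : ℕ → S,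
    (∀ n, r n = (sq n, σ)) ∧ sq 0 ∈ E.init ∧
    ∀ n, sq (n + 1) ∈ σ.next ((List.range n).map sq) (sq n)}

/-- The interpreted system `𝓘(Σ, E)`: global states `S × Σ`, observational
indistinguishability and interpretation via the state component. -/
def stratIS (E : Env S P A Act Obs) (Strats : Set (Strategy E)) :
    IS (S × Strategy E) P A where
  runs := stratRuns E Strats
  sim := fun i p q => E.obs i (p.1 p.2).1 = E.obs i (q.1 q.2).1
  intp := fun gs => E.intp gs.1
  sim_refl := fun _ _ _ _ => rfl
  sim_symm := fun _ _ _ _ _ h => h.symm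
  sim_trans := fun _ _ _ _ _ _ _ h h' => h.trans h'

/-- `α` is an action of agent `i` allowed by the top strategy at a state `s`:
either some clause of the template `P_iθ` with action `α` has its guard
satisfiable relative to `π(s)` (for some truth-value assignment to the
variables on which `θ` is undefined), or `α = skip` and the guard of the
implicit `skip` clause (the conjunction of the negations of all other guards)
is satisfiable relative to `π(s)`. -/
def TopEnabled (E : Env S P A Act Obs) (Pi : ProtoT P X Act)
    (θ : X → Option (BForm P)) (s : S) (α : Act) : Prop :=
  (∃ c ∈ Pi, c.2 = α ∧ ∃ v : X → Bool, evalT (E.intp s) θ v c.1) ∨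
  (α = E.skip ∧ ∃ v : X → Bool, ∀ c ∈ Pi, ¬ evalT (E.intp s) θ v c.1)

/-- The value of the top strategy `σ^⊤_{E,Pθ}` on a sequence ending in `s`:
all states reachable from `s` by a joint action each of whose components is
allowed by the corresponding protocol template at `s`. -/
def topNext (E : Env S P A Act Obs) (Pt : A → ProtoT P X Act)
    (θ : X → Option (BForm P)) (s : S) : Set S :=
  {t | ∃ a : A → Act, (∀ i, a i ∈ E.acts i) ∧ E.tr s a t ∧
       ∀ i, TopEnabled E (Pt i) θ s (a i)}

/-- The template `do x → α [] ¬x → β od`. -/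
def choiceTemplate (x : X) (α β : Act) : ProtoT P X Act :=
  [(.atom (.inr x), α), (.neg (.atom (.inr x)), β)]

/-- Exactly one guard of the template holds under any completion, so `skip` is never enabled. -/
theorem enT_choiceTemplate (E : Env S P A Act Obs)
    {θ : X → Option (BForm P)} {x : X} (hx : θ x = none) (α β : Act) (v : X → Bool) (s : S) :
    enT E (choiceTemplate x α β) θ v s = {bif v x then α else β} := by
  ext γ
  cases h : v x <;> simp [enT, choiceTemplate, evalT, hx, h, eq_comm]

end EpiSyn
namespace EpiSyn

/-! ### The environment of Example 4 -/

/-- States `s0`, `s1`, `s2`. -/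
inductive TSt : Type | s0 | s1 | s2
  deriving DecidableEq

instance instFintypeTSt : Fintype TSt :=
  ⟨{TSt.s0, TSt.s1, TSt.s2}, fun x => by cases x <;> simp⟩

/-- Actions `a`, `b`, `skip` of the single agent. -/
inductive TAc : Type | a | b | skip
  deriving DecidableEq

instance instFintypeTAc : Fintype TAc :=
  ⟨{TAc.a, TAc.b, TAc.skip}, fun x => by cases x <;> simp⟩

/-- The transition relation: `s0 →^a s1`, `s0 →^b s2`, `s1 →^{a,b} s1`,
`s2 →^{a,b} s2`, and `s →^{skip} s` for every `s`. -/
def tTr : TSt → (Unit → TAc) → TSt → Prop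
  | .s0, α, t => (α () = .a ∧ t = .s1) ∨ (α () = .b ∧ t = .s2) ∨
      (α () = .skip ∧ t = .s0)
  | .s1, _, t => t = .s1
  | .s2, _, t => t = .s2

instance : ∀ s α t, Decidable (tTr s α t) := fun s α t => by
  cases s <;> dsimp [tTr] <;> infer_instance

/-- The single-agent environment with initial state `s0`, actions
`{a, b, skip}`, full observation of the state, and no atomic propositions. -/
def tEnv : Env TSt Empty Unit TAc TSt where
  init := {TSt.s0}
  acts := fun _ => Set.univ
  skip := TAc.skip
  skip_mem := fun _ => Set.mem_univ _
  tr := tTr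
  serial := fun s α _ =>
    (by decide : ∀ (s : TSt) (α : Unit → TAc), ∃ t, tTr s α t) s α
  skip_loop := by decide
  obs := fun _ s => s
  intp := fun _ => ∅

/-- The protocol template `do x → a [] ¬x → b od` for the single agent,
with a single template variable `x`. -/
def tTemplate : Unit → ProtoT Empty Unit TAc := fun _ =>
  [ (BForm.atom (Sum.inr ()), TAc.a),
    (BForm.neg (BForm.atom (Sum.inr ())), TAc.b) ]

/-- The empty partial substitution. -/
def tTheta : Unit → Option (BForm Empty) := fun _ => none

/-- The maximally nondeterministic (top) strategy `σ_⊤`, allowing any action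
at any time: `σ_⊤(s₀…s_k) = {t : s_k →^α t for some action α}`. -/
def sigmaTop : Strategy tEnv where
  next := fun _ s => {t | ∃ α : Unit → TAc, tEnv.tr s α t}
  nonemp := fun _ s =>
    ⟨s, ⟨fun _ => TAc.skip,
      (by decide : ∀ s : TSt, tTr s (fun _ => TAc.skip) s) s⟩⟩
  tr_ok := fun _ s t ht => by
    obtain ⟨α, hα⟩ := ht
    exact ⟨α, fun _ => Set.mem_univ _, hα⟩

theorem tEnv_tr_s0_s1_iff {α : Unit → TAc} : tEnv.tr .s0 α .s1 ↔ α () = .a := by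
  simp [tEnv, tTr]

theorem tEnv_tr_s0_s2_iff {α : Unit → TAc} : tEnv.tr .s0 α .s2 ↔ α () = .b := by
  simp [tEnv, tTr]

theorem sigmaTop_next_s0 (pre : List TSt) :
    TSt.s1 ∈ sigmaTop.next pre .s0 ∧ TSt.s2 ∈ sigmaTop.next pre .s0 :=
  ⟨⟨fun _ => TAc.a, tEnv_tr_s0_s1_iff.2 rfl⟩, ⟨fun _ => TAc.b, tEnv_tr_s0_s2_iff.2 rfl⟩⟩

/-- Example 3 of the paper. In this environment, with the
protocol template `do x → a [] ¬x → b od` and the empty substitution, the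
top strategy `σ_⊤` is not substitution consistent with respect to any memory
definition `μ`. -/
theorem sigmaTop_not_substitution_consistent :
    ∀ μ : MemoryDef TSt Unit,
      ¬ SubstConsistent tEnv tTemplate tTheta sigmaTop μ := by
  rintro μ ⟨-, hsc⟩
  obtain ⟨v, hv⟩ := hsc [] .s0
  have hen : ∀ i, enT tEnv (tTemplate i) tTheta v .s0 = {bif v () then .a else .b} :=
    fun _ => enT_choiceTemplate tEnv rfl .a .b v .s0
  obtain ⟨hs1, hs2⟩ := sigmaTop_next_s0 []
  simp only [hv, hen] at hs1 hs2
  obtain ⟨a1, ha1, ht1⟩ := hs1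
  obtain ⟨a2, ha2, ht2⟩ := hs2
  have e1 : TAc.a = bif v () then .a else .b := tEnv_tr_s0_s1_iff.1 ht1 ▸ ha1 ()
  have e2 : TAc.b = bif v () then .a else .b := tEnv_tr_s0_s2_iff.1 ht2 ▸ ha2 ()
  cases h : v () <;> simp [h] at e1 e2

end EpiSyn
end
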